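/- Let S = {(v,w) ∈ ℕ² : v + w ≤ 4} index the degree-4 total order basis on the reference quadrilateral. Let M be the diagonal real S×S matrix with M_{(v,w),(v,w)} = 4/((2v+1)(2w+1)). For real parameters q0, q1, q2, q3, q4, q5, let Q be the symmetric S×S matrix whose only nonzero entries (listing one entry of each symmetric pair) are Q_{(0,4),(0,4)} = Q_{(4,0),(4,0)} = q0, Q_{(1,3),(1,3)} = Q_{(3,1),(3,1)} = q1, Q_{(2,2),(2,2)} = q2, Q_{(0,4),(2,2)} = Q_{(2,2),(4,0)} = q3, Q_{(1,3),(3,1)} = q4, and Q_{(0,4),(4,0)} = q5. Then M + Q is positive definite if and only if the following five conditions all hold: q0 > −4/9; q1 > −4/21; 36·q0 + 225·q0·q2 + 100·q2 − 225·q3² + 16 > 0; (21·q1 + 4)² − 441·q4² > 0; and (9·q0 − 9·q5 + 4)·(9·q0·(25·q2 + 4) + 25·q2·(9·q5 + 4) + 2·(−225·q3² + 18·q5 + 8)) > 0. -/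

import Mathlib

/-!
Listing the five modes that carry entries of `Q` last, `M + Q` is block diagonal: the other ten
modes keep their positive mass, the modes `(0,4), (2,2), (4,0)` form the block
`!![a, q3, q5; q3, c, q3; q5, q3, a]` with `a = 4/9 + q0`, `c = 4/25 + q2`, and the modes
`(1,3), (3,1)` form `!![t, q4; q4, t]` with `t = 4/21 + q1`. The 3 × 3 block is invariant under
swapping its outer coordinates, so in the coordinates `X - Z`, `X + Z` it splits into
`(a - q5)/2 · (X - Z)²` plus a binary form. Each block is then settled by the 2 × 2 criterion
`0 < p ∧ b² < p r`, and the five inequalities are these criteria with denominators cleared.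
-/

/-- The index set of the degree-4 total order basis: modes `(v,w)` with `v + w ≤ 4`. -/
def TO4 : Type := {p : Fin 5 × Fin 5 // (p.1 : ℕ) + (p.2 : ℕ) ≤ 4}

instance : Fintype TO4 := Subtype.fintype _
instance : DecidableEq TO4 := Subtype.instDecidableEq

/-- Modal mass matrix of the degree-4 total order Legendre basis:
`M_{(v,w),(v,w)} = 4/((2v+1)(2w+1))`. -/
noncomputable def massTO4 : Matrix TO4 TO4 ℝ :=
  Matrix.diagonal fun p =>
    (4 : ℝ) / (((2 * (p.val.1 : ℕ) + 1) * (2 * (p.val.2 : ℕ) + 1) : ℕ) : ℝ)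

/-- The symmetric filter matrix `Q(q0, …, q5)` for the degree-4 total order basis. -/
def filterTO4 (q0 q1 q2 q3 q4 q5 : ℝ) : Matrix TO4 TO4 ℝ :=
  fun i j =>
    if (i.val = (0, 4) ∧ j.val = (0, 4)) ∨ (i.val = (4, 0) ∧ j.val = (4, 0)) then q0
    else if (i.val = (1, 3) ∧ j.val = (1, 3)) ∨ (i.val = (3, 1) ∧ j.val = (3, 1)) then q1
    else if i.val = (2, 2) ∧ j.val = (2, 2) then q2
    else if (i.val = (0, 4) ∧ j.val = (2, 2)) ∨ (i.val = (2, 2) ∧ j.val = (0, 4)) ∨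
            (i.val = (2, 2) ∧ j.val = (4, 0)) ∨ (i.val = (4, 0) ∧ j.val = (2, 2)) then q3
    else if (i.val = (1, 3) ∧ j.val = (3, 1)) ∨ (i.val = (3, 1) ∧ j.val = (1, 3)) then q4
    else if (i.val = (0, 4) ∧ j.val = (4, 0)) ∨ (i.val = (4, 0) ∧ j.val = (0, 4)) then q5
    else 0

open Matrix

/-- The quadratic form of `!![p, b; b, r]`. -/
def binaryForm (p b r X Y : ℝ) : ℝ := p * X ^ 2 + 2 * b * X * Y + r * Y ^ 2

/-- The quadratic form of `!![a, b, e; b, c, b; e, b, a]`. -/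
def ternaryForm (a c b e X Y Z : ℝ) : ℝ :=
  a * X ^ 2 + c * Y ^ 2 + a * Z ^ 2 + 2 * b * X * Y + 2 * b * Y * Z + 2 * e * X * Z

section Forms

variable {p b r a c e : ℝ}

lemma mul_binaryForm (p b r X Y : ℝ) :
    p * binaryForm p b r X Y = (p * X + b * Y) ^ 2 + (p * r - b ^ 2) * Y ^ 2 := by
  unfold binaryForm; ring

lemma binaryForm_nonneg_of_pos (h : ∀ X Y, X ≠ 0 ∨ Y ≠ 0 → 0 < binaryForm p b r X Y)
    (X Y : ℝ) : 0 ≤ binaryForm p b r X Y := by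
  by_cases h0 : X = 0 ∧ Y = 0
  · simp [binaryForm, h0]
  · exact (h X Y (by tauto)).le

lemma ternaryForm_nonneg_of_pos
    (h : ∀ X Y Z, X ≠ 0 ∨ Y ≠ 0 ∨ Z ≠ 0 → 0 < ternaryForm a c b e X Y Z) (X Y Z : ℝ) :
    0 ≤ ternaryForm a c b e X Y Z := by
  by_cases h0 : X = 0 ∧ Y = 0 ∧ Z = 0
  · simp [ternaryForm, h0]
  · exact (h X Y Z (by tauto)).le

lemma binaryForm_pos_iff :
    (∀ X Y, X ≠ 0 ∨ Y ≠ 0 → 0 < binaryForm p b r X Y) ↔ 0 < p ∧ b ^ 2 < p * r := by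
  constructor
  · intro h
    have hp : 0 < p := by simpa [binaryForm] using h 1 0 (Or.inl one_ne_zero)
    have hpb := mul_pos hp (h b (-p) (Or.inr (neg_ne_zero.mpr hp.ne')))
    rw [mul_binaryForm] at hpb
    refine ⟨hp, ?_⟩
    nlinarith
  · rintro ⟨hp, hb⟩ X Y hXY
    rcases eq_or_ne Y 0 with rfl | hY
    · have hX : X ≠ 0 := by simpa using hXY
      have : 0 < p * X ^ 2 := by positivity
      simpa [binaryForm] using this
    · refine pos_of_mul_pos_right ?_ hp.le
      rw [mul_binaryForm]
      have : 0 < (p * r - b ^ 2) * Y ^ 2 := mul_pos (by linarith) (by positivity)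
      positivity

lemma ternaryForm_eq_sub_sq_add_binaryForm (a c b e X Y Z : ℝ) :
    ternaryForm a c b e X Y Z =
      (a - e) / 2 * (X - Z) ^ 2 + binaryForm ((a + e) / 2) b c (X + Z) Y := by
  unfold ternaryForm binaryForm; ring

lemma ternaryForm_pos_iff_binaryForm_pos :
    (∀ X Y Z, X ≠ 0 ∨ Y ≠ 0 ∨ Z ≠ 0 → 0 < ternaryForm a c b e X Y Z) ↔
      0 < a - e ∧ ∀ S Y, S ≠ 0 ∨ Y ≠ 0 → 0 < binaryForm ((a + e) / 2) b c S Y := by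
  simp only [ternaryForm_eq_sub_sq_add_binaryForm]
  constructor
  · intro h
    refine ⟨?_, fun S Y hSY => ?_⟩
    · simpa [binaryForm] using h 1 0 (-1) (Or.inl one_ne_zero)
    · have hSY' : S / 2 ≠ 0 ∨ Y ≠ 0 ∨ S / 2 ≠ 0 := by
        rcases hSY with hS | hY
        · exact Or.inl (div_ne_zero hS two_ne_zero)
        · exact Or.inr (Or.inl hY)
      simpa using h (S / 2) Y (S / 2) hSY'
  · rintro ⟨hae, hbin⟩ X Y Z hXYZ
    rcases eq_or_ne X Z with rfl | hXZ
    · have hXY : X + X ≠ 0 ∨ Y ≠ 0 := by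
        rcases hXYZ with hX | hY | hX
        · exact Or.inl (by simpa using hX)
        · exact Or.inr hY
        · exact Or.inl (by simpa using hX)
      simpa using hbin _ _ hXY
    · have hXZ' : X - Z ≠ 0 := sub_ne_zero.mpr hXZ
      have : 0 < (a - e) / 2 * (X - Z) ^ 2 := by positivity
      linarith [binaryForm_nonneg_of_pos hbin (X + Z) Y]

lemma ternaryForm_pos_iff :
    (∀ X Y Z, X ≠ 0 ∨ Y ≠ 0 ∨ Z ≠ 0 → 0 < ternaryForm a c b e X Y Z) ↔
      0 < a ∧ b ^ 2 < a * c ∧ 0 < (a - e) * ((a + e) * c - 2 * b ^ 2) := by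
  rw [ternaryForm_pos_iff_binaryForm_pos, binaryForm_pos_iff]
  constructor
  · rintro ⟨hae, hp, hb⟩
    have hc : 0 < c := by nlinarith
    exact ⟨by linarith, by nlinarith, mul_pos hae (by linarith)⟩
  · rintro ⟨ha, hac, hprod⟩
    have hc : 0 < c := by nlinarith [sq_nonneg b]
    -- for `e ≥ a` the second factor is at least `2 (a c - b ^ 2) > 0`, so the product is not positive
    have hae : 0 < a - e := by
      by_contra! h
      nlinarith [mul_nonneg (neg_nonneg.mpr h) (by nlinarith : (0 : ℝ) ≤ (a + e) * c - 2 * b ^ 2)]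
    have hsecond : 0 < (a + e) * c - 2 * b ^ 2 := pos_of_mul_pos_right hprod hae.le
    exact ⟨hae, by nlinarith, by linarith⟩

end Forms

namespace TO4

def mode (v w : Fin 5) (h : (v : ℕ) + (w : ℕ) ≤ 4 := by decide) : TO4 := ⟨(v, w), h⟩

def coupled : Finset TO4 := {mode 0 4, mode 2 2, mode 4 0, mode 1 3, mode 3 1}

lemma compl_coupled : coupledᶜ = {mode 0 0, mode 0 1, mode 0 2, mode 0 3, mode 1 0, mode 1 1,
    mode 1 2, mode 2 0, mode 2 1, mode 3 0} := by
  decide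

lemma sum_univ (f : TO4 → ℝ) : ∑ i, f i =
    f (mode 0 0) + f (mode 0 1) + f (mode 0 2) + f (mode 0 3) + f (mode 0 4) + f (mode 1 0) +
    f (mode 1 1) + f (mode 1 2) + f (mode 1 3) + f (mode 2 0) + f (mode 2 1) + f (mode 2 2) +
    f (mode 3 0) + f (mode 3 1) + f (mode 4 0) := by
  rw [show (Finset.univ : Finset TO4) = {mode 0 0, mode 0 1, mode 0 2, mode 0 3, mode 0 4,
    mode 1 0, mode 1 1, mode 1 2, mode 1 3, mode 2 0, mode 2 1, mode 2 2, mode 3 0, mode 3 1,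
    mode 4 0} by decide]
  repeat rw [Finset.sum_insert (by decide)]
  rw [Finset.sum_singleton]
  ring

end TO4

open TO4

lemma massTO4_apply_self (i : TO4) :
    massTO4 i i = 4 / (((2 * (i.val.1 : ℕ) + 1) * (2 * (i.val.2 : ℕ) + 1) : ℕ) : ℝ) :=
  diagonal_apply_eq _ _

lemma massTO4_apply_self_pos (i : TO4) : 0 < massTO4 i i := by
  rw [massTO4_apply_self]
  positivity

lemma dotProduct_mulVec_massTO4_add_filterTO4 (q0 q1 q2 q3 q4 q5 : ℝ) (x : TO4 → ℝ) :
    x ⬝ᵥ (massTO4 + filterTO4 q0 q1 q2 q3 q4 q5) *ᵥ x =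
      ∑ i ∈ coupledᶜ, massTO4 i i * x i ^ 2 +
      ternaryForm (4 / 9 + q0) (4 / 25 + q2) q3 q5 (x (mode 0 4)) (x (mode 2 2)) (x (mode 4 0)) +
      binaryForm (4 / 21 + q1) q4 (4 / 21 + q1) (x (mode 1 3)) (x (mode 3 1)) := by
  have hmass : x ⬝ᵥ massTO4 *ᵥ x = ∑ i, massTO4 i i * x i ^ 2 := by
    simp only [dotProduct, massTO4, mulVec_diagonal, diagonal_apply_eq]
    exact Finset.sum_congr rfl fun i _ => by ring
  have hfilter : x ⬝ᵥ filterTO4 q0 q1 q2 q3 q4 q5 *ᵥ x =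
      ∑ i, x i * ∑ j, filterTO4 q0 q1 q2 q3 q4 q5 i j * x j := rfl
  rw [add_mulVec, dotProduct_add, hmass, hfilter, compl_coupled]
  simp only [massTO4_apply_self]
  repeat rw [Finset.sum_insert (by decide)]
  simp only [Finset.sum_singleton, sum_univ]
  simp +decide only [filterTO4, mode]
  norm_num [ternaryForm, binaryForm]
  ring

lemma isHermitian_massTO4_add_filterTO4 (q0 q1 q2 q3 q4 q5 : ℝ) :
    (massTO4 + filterTO4 q0 q1 q2 q3 q4 q5).IsHermitian := by
  refine (isHermitian_diagonal _).add (isHermitian_iff_isSymm.mpr (IsSymm.ext fun i j => ?_))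
  unfold filterTO4
  exact if_congr (by tauto) rfl (if_congr (by tauto) rfl (if_congr (by tauto) rfl
    (if_congr (by tauto) rfl (if_congr (by tauto) rfl (if_congr (by tauto) rfl rfl)))))

def coupledVector (X Y Z U V : ℝ) : TO4 → ℝ := fun i =>
  if i = mode 0 4 then X else if i = mode 2 2 then Y else if i = mode 4 0 then Z
  else if i = mode 1 3 then U else if i = mode 3 1 then V else 0

lemma coupledVector_eq_zero {X Y Z U V : ℝ} (h : coupledVector X Y Z U V = 0) :
    X = 0 ∧ Y = 0 ∧ Z = 0 ∧ U = 0 ∧ V = 0 := by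
  have h04 := congrFun h (mode 0 4)
  have h22 := congrFun h (mode 2 2)
  have h40 := congrFun h (mode 4 0)
  have h13 := congrFun h (mode 1 3)
  have h31 := congrFun h (mode 3 1)
  simp +decide only [coupledVector, if_true, if_false, Pi.zero_apply]
    at h04 h22 h40 h13 h31
  exact ⟨h04, h22, h40, h13, h31⟩

lemma dotProduct_mulVec_coupledVector (q0 q1 q2 q3 q4 q5 X Y Z U V : ℝ) :
    coupledVector X Y Z U V ⬝ᵥ (massTO4 + filterTO4 q0 q1 q2 q3 q4 q5) *ᵥ coupledVector X Y Z U V =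
      ternaryForm (4 / 9 + q0) (4 / 25 + q2) q3 q5 X Y Z +
      binaryForm (4 / 21 + q1) q4 (4 / 21 + q1) U V := by
  rw [dotProduct_mulVec_massTO4_add_filterTO4, compl_coupled]
  repeat rw [Finset.sum_insert (by decide)]
  simp +decide only [Finset.sum_singleton, coupledVector, if_true, if_false]
  ring

lemma posDef_massTO4_add_filterTO4_of_forms_pos {q0 q1 q2 q3 q4 q5 : ℝ}
    (hT : ∀ X Y Z, X ≠ 0 ∨ Y ≠ 0 ∨ Z ≠ 0 →
      0 < ternaryForm (4 / 9 + q0) (4 / 25 + q2) q3 q5 X Y Z)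
    (hB : ∀ U V, U ≠ 0 ∨ V ≠ 0 → 0 < binaryForm (4 / 21 + q1) q4 (4 / 21 + q1) U V) :
    (massTO4 + filterTO4 q0 q1 q2 q3 q4 q5).PosDef := by
  refine posDef_iff_dotProduct_mulVec.mpr ⟨isHermitian_massTO4_add_filterTO4 .., fun x hx => ?_⟩
  rw [star_trivial, dotProduct_mulVec_massTO4_add_filterTO4]
  have hT0 := ternaryForm_nonneg_of_pos hT (x (mode 0 4)) (x (mode 2 2)) (x (mode 4 0))
  have hB0 := binaryForm_nonneg_of_pos hB (x (mode 1 3)) (x (mode 3 1))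
  have hterm : ∀ i ∈ coupledᶜ, 0 ≤ massTO4 i i * x i ^ 2 := fun i _ =>
    mul_nonneg (massTO4_apply_self_pos i).le (sq_nonneg (x i))
  have hS0 := Finset.sum_nonneg hterm
  by_contra! hle
  refine hx (funext fun i => ?_)
  by_cases hi : i ∈ coupled
  · have hTz : x (mode 0 4) = 0 ∧ x (mode 2 2) = 0 ∧ x (mode 4 0) = 0 := by
      by_contra h
      exact (hT (x (mode 0 4)) (x (mode 2 2)) (x (mode 4 0)) (by tauto)).ne' (by linarith)
    have hBz : x (mode 1 3) = 0 ∧ x (mode 3 1) = 0 := by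
      by_contra h
      exact (hB (x (mode 1 3)) (x (mode 3 1)) (by tauto)).ne' (by linarith)
    simp only [coupled, Finset.mem_insert, Finset.mem_singleton] at hi
    rcases hi with rfl | rfl | rfl | rfl | rfl <;> simp [hTz, hBz]
  · have hsum : ∑ i ∈ coupledᶜ, massTO4 i i * x i ^ 2 = 0 := by linarith
    have hi0 := (Finset.sum_eq_zero_iff_of_nonneg hterm).mp hsum i (Finset.mem_compl.mpr hi)
    simpa [(massTO4_apply_self_pos i).ne'] using hi0

lemma posDef_massTO4_add_filterTO4_iff (q0 q1 q2 q3 q4 q5 : ℝ) :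
    (massTO4 + filterTO4 q0 q1 q2 q3 q4 q5).PosDef ↔
      (∀ X Y Z, X ≠ 0 ∨ Y ≠ 0 ∨ Z ≠ 0 →
        0 < ternaryForm (4 / 9 + q0) (4 / 25 + q2) q3 q5 X Y Z) ∧
      (∀ U V, U ≠ 0 ∨ V ≠ 0 → 0 < binaryForm (4 / 21 + q1) q4 (4 / 21 + q1) U V) := by
  refine ⟨fun hpd => ?_, fun ⟨hT, hB⟩ => posDef_massTO4_add_filterTO4_of_forms_pos hT hB⟩
  have h := (posDef_iff_dotProduct_mulVec.mp hpd).2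
  simp only [star_trivial] at h
  refine ⟨fun X Y Z hXYZ => ?_, fun U V hUV => ?_⟩
  · have hx : coupledVector X Y Z 0 0 ≠ 0 := fun h0 => by
      obtain ⟨hX, hY, hZ, -⟩ := coupledVector_eq_zero h0
      tauto
    simpa [dotProduct_mulVec_coupledVector, binaryForm] using h hx
  · have hx : coupledVector 0 0 0 U V ≠ 0 := fun h0 => by
      obtain ⟨-, -, -, hU, hV⟩ := coupledVector_eq_zero h0
      tauto
    simpa [dotProduct_mulVec_coupledVector, ternaryForm] using h hx

/-- For the degree-4 total order basis, `M + Q` is positive definite iff the five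
stated inequalities hold. -/
theorem stmt_4 (q0 q1 q2 q3 q4 q5 : ℝ) :
    (massTO4 + filterTO4 q0 q1 q2 q3 q4 q5).PosDef ↔
      q0 > -4 / 9 ∧
      q1 > -4 / 21 ∧
      36 * q0 + 225 * q0 * q2 + 100 * q2 - 225 * q3 ^ 2 + 16 > 0 ∧
      (21 * q1 + 4) ^ 2 - 441 * q4 ^ 2 > 0 ∧
      (9 * q0 - 9 * q5 + 4) *
        (9 * q0 * (25 * q2 + 4) + 25 * q2 * (9 * q5 + 4) +
          2 * (-225 * q3 ^ 2 + 18 * q5 + 8)) > 0 := by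
  rw [posDef_massTO4_add_filterTO4_iff, ternaryForm_pos_iff, binaryForm_pos_iff]
  constructor
  · rintro ⟨⟨ha, hac, hprod⟩, ht, htq⟩
    exact ⟨by linarith, by linarith, by linarith, by linarith, by linarith⟩
  · rintro ⟨ha, ht, hac, htq, hprod⟩
    exact ⟨⟨by linarith, by linarith, by linarith⟩, by linarith, by linarith⟩
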